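/- If M is a proper length-factorial monoid (length-factorial but not factorial), then M admits a master factorization relation (w1,w2): an irredundant unbalanced relation such that every irredundant unbalanced factorization relation of M equals (w1^n, w2^n) or (w2^n, w1^n) for some positive integer n; moreover (w1,w2) and (w2,w1) are the only master relations up to this symmetry. -/

import Mathlib

/-!
Length-factoriality makes any two irredundant relations `(z₁, z₂)`, `(w₁, w₂)` with length
differences `d_z = |z₂| - |z₁|` and `d_w = |w₂| - |w₁|` proportional: `d_w • z₁ + d_z • w₂` and
`d_w • z₂ + d_z • w₁` are factorizations of one element of the same length, hence equal, and
irredundancy splits this into `d_w • z₁ = d_z • w₁` and `d_w • z₂ = d_z • w₂`. Adding one relation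
to the swap of another and cancelling common atoms shows that the length differences of
irredundant relations are closed under subtraction, so they are the multiples of the least
positive one, `d₀`, realized by some `(w₁, w₂)`; a relation of difference `n * d₀` is then
`(n • w₁, n • w₂)`. Two master relations are positive multiples of each other, so comparing their
total lengths shows they agree up to swap.
-/

open Multiset

namespace LF

variable (M : Type*) [CancelCommMonoid M]

/-- `s` is a factorization of the element `b` of the reduced monoid `M_red = Associates M`:
a multiset of atoms of `M_red` whose product is `b`. -/
def IsFactorizationOf (s : Multiset (Associates M)) (b : Associates M) : Prop :=
  (∀ a ∈ s, Irreducible a) ∧ s.prod = b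

/-- The set of factorizations of `x : M`. -/
def FactorsOf (x : M) : Set (Multiset (Associates M)) :=
  {s | IsFactorizationOf M s (Associates.mk x)}

/-- `M` is atomic: every non-unit admits a factorization into atoms. -/
def Atomic : Prop := ∀ x : M, ¬ IsUnit x → (FactorsOf M x).Nonempty

/-- `M` is length-factorial: factorizations of the same element with equal length coincide. -/
def LengthFactorial : Prop :=
  ∀ x : M, ∀ s ∈ FactorsOf M x, ∀ t ∈ FactorsOf M x, card s = card t → s = t

/-- `M` is a factorial (unique factorization) monoid: every element has exactly one
factorization. -/
def Factorial : Prop := ∀ x : M, ∃! s, s ∈ FactorsOf M x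

/-- `(z₁, z₂)` is a factorization relation: two multisets of atoms with the same product. -/
def IsRel (z1 z2 : Multiset (Associates M)) : Prop :=
  (∀ a ∈ z1, Irreducible a) ∧ (∀ a ∈ z2, Irreducible a) ∧ z1.prod = z2.prod

/-- A factorization relation is irredundant if the two sides share no atom. -/
def Irredundant (z1 z2 : Multiset (Associates M)) : Prop := ∀ a, a ∈ z1 → a ∉ z2

/-- Prime element of the reduced monoid. -/
def IsPrimeElem (p : Associates M) : Prop :=
  ¬ IsUnit p ∧ ∀ a b : Associates M, p ∣ a * b → p ∣ a ∨ p ∣ b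

/-- A purely long atom: a non-prime atom which, whenever it appears in an irredundant
unbalanced factorization relation, appears in the longer side. -/
def PurelyLong (a : Associates M) : Prop :=
  Irreducible a ∧ ¬ IsPrimeElem M a ∧
    ∀ z1 z2, IsRel M z1 z2 → Irredundant M z1 z2 → card z1 ≠ card z2 →
      a ∈ z1 → card z2 < card z1

/-- A purely short atom: a non-prime atom which, whenever it appears in an irredundant
unbalanced factorization relation, appears in the shorter side. -/
def PurelyShort (a : Associates M) : Prop :=
  Irreducible a ∧ ¬ IsPrimeElem M a ∧
    ∀ z1 z2, IsRel M z1 z2 → Irredundant M z1 z2 → card z1 ≠ card z2 →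
      a ∈ z1 → card z1 < card z2

/-- `(w₁, w₂)` is a master factorization relation: an irredundant unbalanced factorization
relation such that every irredundant unbalanced factorization relation is of the form
`(n • w₁, n • w₂)` or `(n • w₂, n • w₁)` for some positive integer `n`. -/
def IsMasterRel (w1 w2 : Multiset (Associates M)) : Prop :=
  IsRel M w1 w2 ∧ Irredundant M w1 w2 ∧ card w1 ≠ card w2 ∧
    ∀ z1 z2, IsRel M z1 z2 → Irredundant M z1 z2 → card z1 ≠ card z2 →
      ∃ n : ℕ, 0 < n ∧ ((z1 = n • w1 ∧ z2 = n • w2) ∨ (z1 = n • w2 ∧ z2 = n • w1))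

end LF

namespace Multiset

theorem eq_and_eq_of_add_eq_add_of_disjoint {α : Type*} {a b c d : Multiset α}
    (hac : Disjoint a c) (hbd : Disjoint b d) (h : a + b = c + d) : a = d ∧ b = c := by
  classical
  have hcount : ∀ x, count x a = count x d ∧ count x b = count x c := by
    intro x
    have hx := congrArg (count x) h
    simp only [count_add] at hx
    have hac' : count x a = 0 ∨ count x c = 0 := by
      by_cases hxa : x ∈ a
      · exact Or.inr (count_eq_zero.2 (disjoint_left.1 hac hxa))
      · exact Or.inl (count_eq_zero.2 hxa)
    have hbd' : count x b = 0 ∨ count x d = 0 := by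
      by_cases hxb : x ∈ b
      · exact Or.inr (count_eq_zero.2 (disjoint_left.1 hbd hxb))
      · exact Or.inl (count_eq_zero.2 hxb)
    omega
  exact ⟨ext.2 fun x => (hcount x).1, ext.2 fun x => (hcount x).2⟩

end Multiset

namespace Nat

theorem dvd_of_sub_mem {S : Set ℕ} (hS : ∀ d ∈ S, ∀ e ∈ S, e ≤ d → d - e ∈ S) {d₀ : ℕ}
    (hd₀ : d₀ ∈ S) (hpos : 0 < d₀) (hmin : ∀ d ∈ S, d < d₀ → d = 0) {d : ℕ} (hd : d ∈ S) :
    d₀ ∣ d := by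
  induction d using Nat.strong_induction_on with
  | _ d ih =>
    rcases lt_or_ge d d₀ with hlt | hle
    · rw [hmin d hd hlt]
      exact dvd_zero d₀
    · have h := ih (d - d₀) (by omega) (hS d hd d₀ hd₀ hle)
      exact Nat.sub_add_cancel hle ▸ dvd_add h dvd_rfl

end Nat

instance {M : Type*} [CancelCommMonoid M] : IsRightCancelMul (Associates M) where
  mul_right_cancel c a b h := by
    obtain ⟨a, rfl⟩ := Associates.mk_surjective a
    obtain ⟨b, rfl⟩ := Associates.mk_surjective b
    obtain ⟨c, rfl⟩ := Associates.mk_surjective c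
    simp only [Associates.mk_mul_mk, Associates.mk_eq_mk_iff_associated] at h ⊢
    obtain ⟨u, hu⟩ := h
    exact ⟨u, mul_right_cancel (by rw [mul_right_comm]; exact hu)⟩

namespace LF

variable {M : Type*} [CancelCommMonoid M]

theorem Irredundant.symm {z1 z2 : Multiset (Associates M)} (h : Irredundant M z1 z2) :
    Irredundant M z2 z1 :=
  fun a ha hb => h a hb ha

theorem Irredundant.disjoint_nsmul {z1 z2 : Multiset (Associates M)} (h : Irredundant M z1 z2)
    (m n : ℕ) : Disjoint (m • z1) (n • z2) :=
  disjoint_left.2 fun ha hb => h _ (mem_of_mem_nsmul ha) (mem_of_mem_nsmul hb)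

namespace IsRel

variable {z1 z2 w1 w2 : Multiset (Associates M)}

theorem symm (h : IsRel M z1 z2) : IsRel M z2 z1 :=
  ⟨h.2.1, h.1, h.2.2.symm⟩

theorem add (hz : IsRel M z1 z2) (hw : IsRel M w1 w2) : IsRel M (z1 + w1) (z2 + w2) := by
  refine ⟨fun a ha => ?_, fun a ha => ?_, by rw [prod_add, prod_add, hz.2.2, hw.2.2]⟩
  · exact (mem_add.1 ha).elim (hz.1 a) (hw.1 a)
  · exact (mem_add.1 ha).elim (hz.2.1 a) (hw.2.1 a)

theorem nsmul (h : IsRel M z1 z2) (n : ℕ) : IsRel M (n • z1) (n • z2) :=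
  ⟨fun a ha => h.1 a (mem_of_mem_nsmul ha), fun a ha => h.2.1 a (mem_of_mem_nsmul ha),
    by rw [prod_nsmul, prod_nsmul, h.2.2]⟩

theorem exists_irredundant (h : IsRel M z1 z2) :
    ∃ y1 y2 c, IsRel M y1 y2 ∧ Irredundant M y1 y2 ∧ z1 = y1 + c ∧ z2 = y2 + c := by
  classical
  have e1 : z1 - z1 ∩ z2 + z1 ∩ z2 = z1 := tsub_add_cancel_of_le inter_le_left
  have e2 : z2 - z1 ∩ z2 + z1 ∩ z2 = z2 := tsub_add_cancel_of_le inter_le_right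
  refine ⟨z1 - z1 ∩ z2, z2 - z1 ∩ z2, z1 ∩ z2, ⟨fun a ha => h.1 a (mem_of_le tsub_le_self ha),
    fun a ha => h.2.1 a (mem_of_le tsub_le_self ha), ?_⟩, ?_, e1.symm, e2.symm⟩
  · apply mul_right_cancel (b := (z1 ∩ z2).prod)
    rw [← prod_add, ← prod_add, e1, e2, h.2.2]
  · intro a ha hb
    rw [← count_pos, count_sub, count_inter] at ha hb
    omega

end IsRel

theorem LengthFactorial.eq_of_isRel (hlf : LengthFactorial M) {s t : Multiset (Associates M)}
    (h : IsRel M s t) (hc : card s = card t) : s = t := by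
  obtain ⟨x, hx⟩ := Associates.mk_surjective s.prod
  exact hlf x s ⟨h.1, hx.symm⟩ t ⟨h.2.1, h.2.2.symm.trans hx.symm⟩ hc

theorem LengthFactorial.nsmul_eq_nsmul (hlf : LengthFactorial M)
    {z1 z2 w1 w2 : Multiset (Associates M)} {dz dw : ℕ}
    (hz : IsRel M z1 z2) (hw : IsRel M w1 w2) (hzi : Irredundant M z1 z2)
    (hwi : Irredundant M w1 w2) (hdz : card z1 + dz = card z2) (hdw : card w1 + dw = card w2) :
    dw • z1 = dz • w1 ∧ dw • z2 = dz • w2 := by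
  have hcross : dw • z1 + dz • w2 = dw • z2 + dz • w1 := by
    refine hlf.eq_of_isRel ((hz.nsmul dw).add (hw.symm.nsmul dz)) ?_
    simp only [card_add, card_nsmul, ← hdz, ← hdw]
    ring
  obtain ⟨h1, h2⟩ := Multiset.eq_and_eq_of_add_eq_add_of_disjoint
    (hzi.disjoint_nsmul dw dw) (hwi.symm.disjoint_nsmul dz dz) hcross
  exact ⟨h1, h2.symm⟩

theorem exists_ne_mem_factorsOf (hat : Atomic M) (hnf : ¬ Factorial M) :
    ∃ x : M, ∃ s ∈ FactorsOf M x, ∃ t ∈ FactorsOf M x, s ≠ t := by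
  obtain ⟨x, hx⟩ := not_forall.1 hnf
  have hne : (FactorsOf M x).Nonempty := by
    by_cases hu : IsUnit x
    · exact ⟨0, fun _ h => absurd h (notMem_zero _), by simp [Associates.mk_eq_one.2 hu]⟩
    · exact hat x hu
  obtain ⟨s, hs⟩ := hne
  refine ⟨x, ?_⟩
  by_contra! h
  exact hx ⟨s, hs, fun t ht => h t ht s hs⟩

theorem exists_irredundant_card_lt (hat : Atomic M) (hlf : LengthFactorial M)
    (hnf : ¬ Factorial M) :
    ∃ z1 z2, IsRel M z1 z2 ∧ Irredundant M z1 z2 ∧ card z1 < card z2 := by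
  obtain ⟨x, s, hs, t, ht, hst⟩ := exists_ne_mem_factorsOf hat hnf
  obtain ⟨y1, y2, c, hy, hyi, rfl, rfl⟩ :=
    IsRel.exists_irredundant ⟨hs.1, ht.1, hs.2.trans ht.2.symm⟩
  have hne : card y1 ≠ card y2 := fun h => hst (by rw [hlf.eq_of_isRel hy h])
  rcases hne.lt_or_gt with h | h
  · exact ⟨y1, y2, hy, hyi, h⟩
  · exact ⟨y2, y1, hy.symm, hyi.symm, h⟩

variable (M) in
def IsRelGap (d : ℕ) : Prop :=
  ∃ z1 z2, IsRel M z1 z2 ∧ Irredundant M z1 z2 ∧ card z1 + d = card z2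

theorem isRelGap_sub {d e : ℕ} (hd : IsRelGap M d) (he : IsRelGap M e) (hle : e ≤ d) :
    IsRelGap M (d - e) := by
  obtain ⟨z1, z2, hz, -, hzd⟩ := hd
  obtain ⟨w1, w2, hw, -, hwe⟩ := he
  obtain ⟨y1, y2, c, hy, hyi, h1, h2⟩ := (hz.add hw.symm).exists_irredundant
  refine ⟨y1, y2, hy, hyi, ?_⟩
  have hc1 := congrArg card h1
  have hc2 := congrArg card h2
  simp only [card_add] at hc1 hc2
  omega

theorem IsMasterRel.eq_or_eq_swap {w1 w2 v1 v2 : Multiset (Associates M)}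
    (hw : IsMasterRel M w1 w2) (hv : IsMasterRel M v1 v2) :
    (v1 = w1 ∧ v2 = w2) ∨ (v1 = w2 ∧ v2 = w1) := by
  obtain ⟨n, -, hvw⟩ := hw.2.2.2 v1 v2 hv.1 hv.2.1 hv.2.2.1
  obtain ⟨m, -, hwv⟩ := hv.2.2.2 w1 w2 hw.1 hw.2.1 hw.2.2.1
  have hv_card : card v1 + card v2 = n * (card w1 + card w2) := by
    rcases hvw with ⟨rfl, rfl⟩ | ⟨rfl, rfl⟩ <;> simp only [card_nsmul] <;> ring
  have hw_card : card w1 + card w2 = m * (card v1 + card v2) := by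
    rcases hwv with ⟨rfl, rfl⟩ | ⟨rfl, rfl⟩ <;> simp only [card_nsmul] <;> ring
  have hn : n = 1 := by
    have hpos : 0 < card w1 + card w2 := by have := hw.2.2.1; omega
    rw [hv_card, ← mul_assoc] at hw_card
    exact Nat.eq_one_of_mul_eq_one_left (Nat.eq_of_mul_eq_mul_right hpos (by linarith))
  simpa only [hn, one_nsmul] using hvw

theorem isMasterRel_of_forall_dvd (hlf : LengthFactorial M) {w1 w2 : Multiset (Associates M)}
    {d₀ : ℕ} (hw : IsRel M w1 w2) (hwi : Irredundant M w1 w2) (hwd : card w1 + d₀ = card w2)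
    (hd₀ : 0 < d₀) (hdvd : ∀ d, IsRelGap M d → d₀ ∣ d) : IsMasterRel M w1 w2 := by
  have hmul : ∀ z1 z2, IsRel M z1 z2 → Irredundant M z1 z2 → card z1 < card z2 →
      ∃ n, 0 < n ∧ z1 = n • w1 ∧ z2 = n • w2 := by
    intro z1 z2 hz hzi hlt
    have hzd : card z1 + (card z2 - card z1) = card z2 := Nat.add_sub_of_le hlt.le
    obtain ⟨n, hn⟩ := hdvd _ ⟨z1, z2, hz, hzi, hzd⟩
    obtain ⟨h1, h2⟩ := hlf.nsmul_eq_nsmul hz hw hzi hwi hzd hwd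
    rw [hn, mul_nsmul'] at h1 h2
    exact ⟨n, Nat.pos_of_mul_pos_left (hn ▸ Nat.sub_pos_of_lt hlt),
      (nsmul_right_inj hd₀.ne').1 h1, (nsmul_right_inj hd₀.ne').1 h2⟩
  refine ⟨hw, hwi, by omega, fun z1 z2 hz hzi hne => ?_⟩
  rcases hne.lt_or_gt with h | h
  · obtain ⟨n, hn, rfl, rfl⟩ := hmul z1 z2 hz hzi h
    exact ⟨n, hn, Or.inl ⟨rfl, rfl⟩⟩
  · obtain ⟨n, hn, rfl, rfl⟩ := hmul z2 z1 hz.symm hzi.symm h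
    exact ⟨n, hn, Or.inr ⟨rfl, rfl⟩⟩

theorem exists_isMasterRel (hat : Atomic M) (hlf : LengthFactorial M) (hnf : ¬ Factorial M) :
    ∃ w1 w2, IsMasterRel M w1 w2 := by
  classical
  obtain ⟨z1, z2, hz, hzi, hlt⟩ := exists_irredundant_card_lt hat hlf hnf
  have hex : ∃ d, 0 < d ∧ IsRelGap M d :=
    ⟨card z2 - card z1, by omega, z1, z2, hz, hzi, by omega⟩
  obtain ⟨hd₀, w1, w2, hw, hwi, hwd⟩ := Nat.find_spec hex
  have hmin : ∀ d, IsRelGap M d → d < Nat.find hex → d = 0 := fun d hd hlt => by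
    by_contra h
    exact Nat.find_min hex hlt ⟨Nat.pos_of_ne_zero h, hd⟩
  refine ⟨w1, w2, isMasterRel_of_forall_dvd hlf hw hwi hwd hd₀ fun d hd => ?_⟩
  exact Nat.dvd_of_sub_mem (S := {d | IsRelGap M d}) (fun _ hd _ he hle => isRelGap_sub hd he hle)
    ⟨w1, w2, hw, hwi, hwd⟩ hd₀ hmin hd

variable (M) in
/-- A proper length-factorial monoid admits a master factorization relation,
which is unique up to swapping its two components. -/
theorem stmt3 (hat : Atomic M) (hlf : LengthFactorial M) (hnf : ¬ Factorial M) :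
    ∃ w1 w2 : Multiset (Associates M), IsMasterRel M w1 w2 ∧
      ∀ v1 v2, IsMasterRel M v1 v2 → (v1 = w1 ∧ v2 = w2) ∨ (v1 = w2 ∧ v2 = w1) := by
  obtain ⟨w1, w2, hw⟩ := exists_isMasterRel hat hlf hnf
  exact ⟨w1, w2, hw, fun _ _ hv => hw.eq_or_eq_swap hv⟩

end LF
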